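/- arXiv:1607.08832 — 4 statements merged into one kernel-verified Lean document; each statement's English description precedes it below -/
import Mathlib

section
/- Let G be a digraph with adjacency matrix A and regular partition π with quotient matrix B. Let m(x) = x^r − α_{r−1}x^{r−1} − ⋯ − α_0 be the minimal polynomial of B. Then the numbers n_k = s·B^k·jᵀ (the orders of the iterated line digraphs L^k(G)) satisfy the linear recurrence n_k = α_{r−1} n_{k−1} + ⋯ + α_0 n_{k−r} for all k ≥ r. -/
open Matrix Polynomial

theorem pow_eq_sum_of_aeval_eq_zero {R A : Type*} [CommRing R] [Ring A] [Algebra R A]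
    {a : A} {r : ℕ} {α : ℕ → R}
    (ha : aeval a (X ^ r - ∑ i ∈ Finset.range r, C (α i) * X ^ i) = 0)
    {k : ℕ} (hk : r ≤ k) :
    a ^ k = ∑ i ∈ Finset.range r, α i • a ^ (k - r + i) := by
  have har : a ^ r = ∑ i ∈ Finset.range r, α i • a ^ i := by
    simpa only [map_sub, map_sum, map_pow, aeval_X, map_mul, aeval_C, ← Algebra.smul_def,
      sub_eq_zero] using ha
  calc a ^ k = a ^ (k - r) * a ^ r := by rw [← pow_add, Nat.sub_add_cancel hk]
    _ = ∑ i ∈ Finset.range r, α i • a ^ (k - r + i) := by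
      simp only [har, Finset.mul_sum, mul_smul_comm, pow_add]

theorem LinearMap.map_pow_eq_sum_of_aeval_eq_zero {R A M : Type*} [CommRing R] [Ring A]
    [Algebra R A] [AddCommMonoid M] [Module R M] (f : A →ₗ[R] M)
    {a : A} {r : ℕ} {α : ℕ → R}
    (ha : aeval a (X ^ r - ∑ i ∈ Finset.range r, C (α i) * X ^ i) = 0)
    {k : ℕ} (hk : r ≤ k) :
    f (a ^ k) = ∑ i ∈ Finset.range r, α i • f (a ^ (k - r + i)) := by
  rw [pow_eq_sum_of_aeval_eq_zero ha hk, map_sum]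
  simp only [map_smul]

/-- The functional `M ↦ s M jᵀ` of the paper, so that `n_k` is its value at `Bᵏ`. -/
def Matrix.weightedSum {ι R : Type*} [Fintype ι] [CommSemiring R] (s : ι → R) :
    Matrix ι ι R →ₗ[R] R where
  toFun M := ∑ i, ∑ j, s i * M i j
  map_add' M N := by simp only [add_apply, mul_add, Finset.sum_add_distrib]
  map_smul' c M := by
    simp only [smul_apply, smul_eq_mul, mul_left_comm (s _), Finset.mul_sum, RingHom.id_apply]

theorem stmt4_general {m : ℕ}
    (B : Matrix (Fin m) (Fin m) ℚ)
    (s : Fin m → ℚ)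
    (r : ℕ) (α : ℕ → ℚ)
    (hmin : minpoly ℚ B = X ^ r - ∑ i ∈ Finset.range r, C (α i) * X ^ i)
    (n : ℕ → ℚ) (hn : ∀ k, n k = ∑ i, ∑ j, s i * (B ^ k) i j) :
    ∀ k, r ≤ k → n k = ∑ i ∈ Finset.range r, α i * n (k - r + i) := by
  intro k hk
  have hB : aeval B (X ^ r - ∑ i ∈ Finset.range r, C (α i) * X ^ i) = 0 :=
    hmin ▸ minpoly.aeval ℚ B
  have hn' : ∀ k, n k = weightedSum s (B ^ k) := hn
  simpa only [hn', smul_eq_mul] using (weightedSum s).map_pow_eq_sum_of_aeval_eq_zero hB hk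

/-- If the minimal polynomial of the quotient matrix `B` is
`xʳ - α_{r-1}x^{r-1} - ⋯ - α₀`, then `n_k = s·Bᵏ·jᵀ` (the order of `Lᵏ(G)`)
satisfies the recurrence `n_k = α_{r-1}n_{k-1} + ⋯ + α₀ n_{k-r}` for `k ≥ r`. -/
theorem stmt4 {V : Type*} [Fintype V] [DecidableEq V] {m : ℕ}
    (A : Matrix V V ℚ) (π : V → Fin m)
    (S : Matrix V (Fin m) ℚ) (hS : ∀ u i, S u i = if π u = i then 1 else 0)
    (B : Matrix (Fin m) (Fin m) ℚ) (hB : S * B = A * S)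
    (s : Fin m → ℚ) (hs : ∀ i, s i = ∑ u, S u i)
    (r : ℕ) (hr : 1 ≤ r) (α : ℕ → ℚ)
    (hmin : minpoly ℚ B = X ^ r - ∑ i ∈ Finset.range r, C (α i) * X ^ i)
    (n : ℕ → ℚ) (hn : ∀ k, n k = ∑ i, ∑ j, s i * (B ^ k) i j) :
    ∀ k, r ≤ k → n k = ∑ i ∈ Finset.range r, α i * n (k - r + i) :=
  stmt4_general B s r α hmin n hn
end

section
/- Let B = [[0,1,1],[0,1,1],[1,0,0]], s = (6,6,6), and j = (1,1,1). Define n_k = s·B^k·jᵀ. Then n_0 = 18, n_1 = 30, and n_k = n_{k−1} + n_{k−2} for all k ≥ 2. -/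
/-!
The weight vector `s = (6,6,6)` satisfies `s B² = s B + s`, i.e. `s (B² - B - I) = 0`.
Multiplying on the right by `Bᵏ jᵀ` turns this into `n_{k+2} = n_{k+1} + n_k`.
-/

open Matrix

section VecMulPow

variable {R ι : Type*} [Semiring R] [Fintype ι] [DecidableEq ι]

theorem vecMul_pow_add_two {s : ι → R} {B : Matrix ι ι R} (h : s ᵥ* B ^ 2 = s ᵥ* B + s)
    (k : ℕ) : s ᵥ* B ^ (k + 2) = s ᵥ* B ^ (k + 1) + s ᵥ* B ^ k := by
  rw [add_comm k 2, pow_add, ← vecMul_vecMul, h, add_vecMul, vecMul_vecMul, ← pow_succ']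

theorem vecMul_pow_dotProduct_add_two {s : ι → R} {B : Matrix ι ι R}
    (h : s ᵥ* B ^ 2 = s ᵥ* B + s) (j : ι → R) (k : ℕ) :
    (s ᵥ* B ^ (k + 2)) ⬝ᵥ j = (s ᵥ* B ^ (k + 1)) ⬝ᵥ j + (s ᵥ* B ^ k) ⬝ᵥ j := by
  rw [vecMul_pow_add_two h, add_dotProduct]

end VecMulPow

/-- For `B = [[0,1,1],[0,1,1],[1,0,0]]`, `s = (6,6,6)`, `j = (1,1,1)`, the
numbers `n_k = s·Bᵏ·jᵀ` satisfy `n₀ = 18`, `n₁ = 30` and the Fibonacci-type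
recurrence `n_k = n_{k-1} + n_{k-2}` for `k ≥ 2`. -/
theorem stmt7 (B : Matrix (Fin 3) (Fin 3) ℚ)
    (hB : B = !![0, 1, 1; 0, 1, 1; 1, 0, 0])
    (n : ℕ → ℚ) (hn : ∀ k, n k = ((![6, 6, 6] : Fin 3 → ℚ) ᵥ* B ^ k) ⬝ᵥ ![1, 1, 1]) :
    n 0 = 18 ∧ n 1 = 30 ∧ ∀ k, 2 ≤ k → n k = n (k - 1) + n (k - 2) := by
  subst hB
  have hrel : (![6, 6, 6] : Fin 3 → ℚ) ᵥ* !![0, 1, 1; 0, 1, 1; 1, 0, 0] ^ 2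
      = ![6, 6, 6] ᵥ* !![0, 1, 1; 0, 1, 1; 1, 0, 0] + ![6, 6, 6] := by
    ext i; fin_cases i <;> norm_num [sq, vecMul, dotProduct, Fin.sum_univ_succ]
  refine ⟨?_, ?_, fun k hk => ?_⟩
  · norm_num [hn, dotProduct, Fin.sum_univ_succ]
  · norm_num [hn, vecMul, dotProduct, Fin.sum_univ_succ]
  · obtain ⟨m, rfl⟩ := Nat.exists_eq_add_of_le' hk
    simp only [hn, Nat.add_sub_cancel, Nat.add_succ_sub_one]
    exact vecMul_pow_dotProduct_add_two hrel _ m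
end

section
/- For d ≥ 2, let B = [[1,d−1,0,0],[0,0,1,d−2],[1,d−1,0,0],[0,0,1,d−2]], s = ((d+1)d, (d+1)d(d−1), (d+1)d(d−1), (d+1)d(d−1)(d−2)), j = (1,1,1,1), and n_k = s·B^k·jᵀ. Then n_0 = d^4 + d, n_1 = d^5 − d^4 + d^3 + 2d^2 − d, and n_k = (d−1)n_{k−1} + n_{k−2} for all k ≥ 2. -/
open Matrix

/-!
The quotient matrix satisfies `B³ = (d - 1)B² + B`, i.e. `B (B² - (d - 1)B - 1) = 0`. Hence
`n_{k+2} - (d - 1)n_{k+1} - n_k = s Bᵏ (B² - (d - 1)B - 1) jᵀ` vanishes for `k ≥ 1`, and for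
`k = 0` it is the direct check `s (B² - (d - 1)B - 1) jᵀ = 0`.
-/

section Recurrence

variable {ι R : Type*} [Fintype ι] [DecidableEq ι] [CommRing R]

lemma vecMul_pow_dotProduct_sub (M : Matrix ι ι R) (c : R) (u v : ι → R) (k : ℕ) :
    (u ᵥ* M ^ (k + 2)) ⬝ᵥ v - c * (u ᵥ* M ^ (k + 1)) ⬝ᵥ v - (u ᵥ* M ^ k) ⬝ᵥ v =
      (u ᵥ* (M ^ k * (M ^ 2 - c • M - 1))) ⬝ᵥ v := by
  simp only [Matrix.mul_sub, Matrix.mul_smul, Matrix.mul_one, ← pow_add, ← pow_succ,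
    Matrix.vecMul_sub, Matrix.vecMul_smul, sub_dotProduct, smul_dotProduct, smul_eq_mul]

lemma vecMul_pow_dotProduct_recurrence (M : Matrix ι ι R) (c : R) (u v : ι → R)
    (hM : M ^ 3 = c • M ^ 2 + M) (h₀ : (u ᵥ* (M ^ 2 - c • M - 1)) ⬝ᵥ v = 0) (k : ℕ) :
    (u ᵥ* M ^ (k + 2)) ⬝ᵥ v = c * (u ᵥ* M ^ (k + 1)) ⬝ᵥ v + (u ᵥ* M ^ k) ⬝ᵥ v := by
  have hM' : M * (M ^ 2 - c • M - 1) = 0 := by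
    rw [Matrix.mul_sub, Matrix.mul_sub, Matrix.mul_smul, ← pow_succ', ← sq, Matrix.mul_one, hM]
    abel
  rw [← sub_eq_zero, ← sub_sub, vecMul_pow_dotProduct_sub]
  rcases k with _ | k
  · simpa using h₀
  · rw [pow_succ, Matrix.mul_assoc, hM', Matrix.mul_zero, Matrix.vecMul_zero, zero_dotProduct]

end Recurrence

section CyclicKautz

variable (d : ℤ)

def cyclicKautzQuotient : Matrix (Fin 4) (Fin 4) ℤ :=
  !![1, d - 1, 0, 0; 0, 0, 1, d - 2; 1, d - 1, 0, 0; 0, 0, 1, d - 2]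

def cyclicKautzCellSizes : Fin 4 → ℤ :=
  ![(d + 1) * d, (d + 1) * d * (d - 1), (d + 1) * d * (d - 1), (d + 1) * d * (d - 1) * (d - 2)]

lemma cyclicKautzQuotient_sq : cyclicKautzQuotient d ^ 2 =
    !![1, d - 1, d - 1, (d - 1) * (d - 2); 1, d - 1, d - 2, (d - 2) ^ 2;
      1, d - 1, d - 1, (d - 1) * (d - 2); 1, d - 1, d - 2, (d - 2) ^ 2] := by
  rw [sq, cyclicKautzQuotient]
  ext i j
  fin_cases i <;> fin_cases j <;> simp [Matrix.mul_apply, Fin.sum_univ_four] <;> ring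

lemma cyclicKautzQuotient_pow_three :
    cyclicKautzQuotient d ^ 3 = (d - 1) • cyclicKautzQuotient d ^ 2 + cyclicKautzQuotient d := by
  rw [pow_succ, cyclicKautzQuotient_sq, cyclicKautzQuotient]
  ext i j
  fin_cases i <;> fin_cases j <;> simp [Matrix.mul_apply, Fin.sum_univ_four] <;> ring

lemma cyclicKautzCellSizes_vecMul_annihilator :
    (cyclicKautzCellSizes d ᵥ* (cyclicKautzQuotient d ^ 2 - (d - 1) • cyclicKautzQuotient d - 1))
      ⬝ᵥ ![1, 1, 1, 1] = 0 := by
  rw [cyclicKautzQuotient_sq, cyclicKautzQuotient, cyclicKautzCellSizes]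
  simp [Matrix.vecMul, dotProduct, Fin.sum_univ_four, Matrix.one_apply]
  ring

end CyclicKautz

theorem stmt9_general (d : ℤ)
    (B : Matrix (Fin 4) (Fin 4) ℤ)
    (hB : B = !![1, d - 1, 0, 0; 0, 0, 1, d - 2; 1, d - 1, 0, 0; 0, 0, 1, d - 2])
    (s : Fin 4 → ℤ)
    (hs : s = ![(d + 1) * d, (d + 1) * d * (d - 1), (d + 1) * d * (d - 1),
      (d + 1) * d * (d - 1) * (d - 2)])
    (n : ℕ → ℤ) (hn : ∀ k, n k = (s ᵥ* B ^ k) ⬝ᵥ ![1, 1, 1, 1]) :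
    n 0 = d ^ 4 + d ∧ n 1 = d ^ 5 - d ^ 4 + d ^ 3 + 2 * d ^ 2 - d ∧
      ∀ k, 2 ≤ k → n k = (d - 1) * n (k - 1) + n (k - 2) := by
  replace hB : B = cyclicKautzQuotient d := hB
  replace hs : s = cyclicKautzCellSizes d := hs
  subst hB hs
  refine ⟨?_, ?_, fun k hk => ?_⟩
  · simp only [hn, cyclicKautzCellSizes, pow_zero, vecMul_one, dotProduct, Fin.sum_univ_four,
      Fin.isValue, cons_val_zero, cons_val_one, cons_val, mul_one]
    ring
  · simp only [hn, cyclicKautzCellSizes, cyclicKautzQuotient, pow_one, vecMul, dotProduct,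
      of_apply, cons_val', cons_val_fin_one, Fin.sum_univ_four, Fin.isValue, cons_val_zero,
      cons_val_one, cons_val, mul_one, mul_zero, add_zero, zero_add]
    ring
  · obtain ⟨m, rfl⟩ := Nat.exists_eq_add_of_le' hk
    simp only [hn, Nat.add_sub_cancel, show m + 2 - 1 = m + 1 from rfl]
    exact vecMul_pow_dotProduct_recurrence _ _ _ _ (cyclicKautzQuotient_pow_three d)
      (cyclicKautzCellSizes_vecMul_annihilator d) m

/-- For `d ≥ 2`, with `B` the quotient matrix of `CK(d,4)` and `s` the vector
of cell sizes, `n_k = s·Bᵏ·jᵀ` satisfies `n₀ = d⁴ + d`,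
`n₁ = d⁵ - d⁴ + d³ + 2d² - d` and `n_k = (d-1)n_{k-1} + n_{k-2}` for `k ≥ 2`. -/
theorem stmt9 (d : ℤ) (hd : 2 ≤ d)
    (B : Matrix (Fin 4) (Fin 4) ℤ)
    (hB : B = !![1, d - 1, 0, 0; 0, 0, 1, d - 2; 1, d - 1, 0, 0; 0, 0, 1, d - 2])
    (s : Fin 4 → ℤ)
    (hs : s = ![(d + 1) * d, (d + 1) * d * (d - 1), (d + 1) * d * (d - 1),
      (d + 1) * d * (d - 1) * (d - 2)])
    (n : ℕ → ℤ) (hn : ∀ k, n k = (s ᵥ* B ^ k) ⬝ᵥ ![1, 1, 1, 1]) :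
    n 0 = d ^ 4 + d ∧ n 1 = d ^ 5 - d ^ 4 + d ^ 3 + 2 * d ^ 2 - d ∧
      ∀ k, 2 ≤ k → n k = (d - 1) * n (k - 1) + n (k - 2) :=
  stmt9_general d B hB s hs n hn
end

section
/- Let B = [[1,1,0],[0,0,d],[0,0,0]], s = (n, n, n·d), and j = (1,1,1), for positive integers n and d. Then n_k := s·B^k·jᵀ = n(d+2) for all k ≥ 0. -/
open Matrix

/-! The weight vector `s = (n, n, nd)` is a left eigenvector of `B` for the eigenvalue `1`,
so `s Bᵏ = s` for every `k`, and `n_k = s ⬝ j = n + n + nd`. -/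

theorem Matrix.vecMul_pow_eq_self_of_vecMul_eq_self {ι R : Type*} [Fintype ι] [DecidableEq ι]
    [Semiring R] {v : ι → R} {M : Matrix ι ι R} (hv : v ᵥ* M = v) (k : ℕ) :
    v ᵥ* M ^ k = v := by
  induction k with
  | zero => rw [pow_zero, vecMul_one]
  | succ k ih => rw [pow_succ, ← vecMul_vecMul, ih, hv]

theorem vecMul_quotientMatrix_eq_self {R : Type*} [Semiring R] (n d : R) :
    ![n, n, n * d] ᵥ* !![1, 1, 0; 0, 0, d; 0, 0, 0] = ![n, n, n * d] := by
  ext i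
  fin_cases i <;> simp [vecMul, dotProduct, Fin.sum_univ_succ]

theorem stmt13_general (n d : ℕ)
    (B : Matrix (Fin 3) (Fin 3) ℚ)
    (hB : B = !![1, 1, 0; 0, 0, (d : ℚ); 0, 0, 0]) :
    ∀ k : ℕ, ((![(n : ℚ), n, n * d]) ᵥ* B ^ k) ⬝ᵥ ![1, 1, 1] = n * (d + 2) := by
  intro k
  subst hB
  rw [vecMul_pow_eq_self_of_vecMul_eq_self (vecMul_quotientMatrix_eq_self _ _)]
  simp only [dotProduct, Fin.sum_univ_three, cons_val_zero, cons_val_one, cons_val, mul_one]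
  ring

/-- For the quotient matrix `B = [[1,1,0],[0,0,d],[0,0,0]]` of the unicyclic
digraph `G_{n,d}`, with `s = (n, n, nd)` and `j = (1,1,1)`, the numbers
`n_k = s·Bᵏ·jᵀ` are constant, equal to `n(d+2)`. -/
theorem stmt13 (n d : ℕ) (hn : 0 < n) (hd : 0 < d)
    (B : Matrix (Fin 3) (Fin 3) ℚ)
    (hB : B = !![1, 1, 0; 0, 0, (d : ℚ); 0, 0, 0]) :
    ∀ k : ℕ, ((![(n : ℚ), n, n * d]) ᵥ* B ^ k) ⬝ᵥ ![1, 1, 1] = n * (d + 2) :=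
  stmt13_general n d B hB
end
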